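/- Under the Minkowski curvature flow, the Minkowski length and enclosed area evolve by dL_Q/dt = −∫₀^{L_Q(t)} k² ds and dA/dt = −2A(𝒫). Consequently the flow can exist at most until time t_V = A(0)/(2A(𝒫)). -/

import Mathlib

open Real Set MeasureTheory

noncomputable section

def det2 (u v : ℝ × ℝ) : ℝ := u.1 * v.2 - u.2 * v.1

def er (θ : ℝ) : ℝ × ℝ := (Real.cos θ, Real.sin θ)

def eth (θ : ℝ) : ℝ × ℝ := (-Real.sin θ, Real.cos θ)

section Aux

open Function

variable {E : Type*} [NormedAddCommGroup E] [NormedSpace ℝ E]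

/-- First partial derivative of a function on `ℝ × ℝ`. -/
def pdx (g : ℝ × ℝ → E) (x : ℝ × ℝ) : E := fderiv ℝ g x (1, 0)

/-- Second partial derivative of a function on `ℝ × ℝ`. -/
def pdy (g : ℝ × ℝ → E) (x : ℝ × ℝ) : E := fderiv ℝ g x (0, 1)

theorem hasDerivAt_pdx {g : ℝ × ℝ → E} (hg : ContDiff ℝ (⊤ : ℕ∞) g) (u t : ℝ) :
    HasDerivAt (fun u' => g (u', t)) (pdx g (u, t)) u := by
  have h1 : HasDerivAt (fun u' : ℝ => (u', t)) ((1 : ℝ), (0 : ℝ)) u :=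
    (hasDerivAt_id u).prodMk (hasDerivAt_const u t)
  exact (hg.differentiable (by simp) (u, t)).hasFDerivAt.comp_hasDerivAt u h1

theorem hasDerivAt_pdy {g : ℝ × ℝ → E} (hg : ContDiff ℝ (⊤ : ℕ∞) g) (u t : ℝ) :
    HasDerivAt (fun t' => g (u, t')) (pdy g (u, t)) t := by
  have h1 : HasDerivAt (fun t' : ℝ => (u, t')) ((0 : ℝ), (1 : ℝ)) t :=
    (hasDerivAt_const t u).prodMk (hasDerivAt_id t)
  exact (hg.differentiable (by simp) (u, t)).hasFDerivAt.comp_hasDerivAt t h1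

theorem contDiff_pdx {g : ℝ × ℝ → E} (hg : ContDiff ℝ (⊤ : ℕ∞) g) : ContDiff ℝ (⊤ : ℕ∞) (pdx g) :=
  (ContinuousLinearMap.apply ℝ E ((1 : ℝ), (0 : ℝ))).contDiff.comp
    (hg.fderiv_right (m := (⊤ : ℕ∞)) le_rfl)

theorem contDiff_pdy {g : ℝ × ℝ → E} (hg : ContDiff ℝ (⊤ : ℕ∞) g) : ContDiff ℝ (⊤ : ℕ∞) (pdy g) :=
  (ContinuousLinearMap.apply ℝ E ((0 : ℝ), (1 : ℝ))).contDiff.comp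
    (hg.fderiv_right (m := (⊤ : ℕ∞)) le_rfl)

theorem pdy_pdx {g : ℝ × ℝ → E} (hg : ContDiff ℝ (⊤ : ℕ∞) g) (x : ℝ × ℝ) :
    pdy (pdx g) x = pdx (pdy g) x := by
  have hdf : Differentiable ℝ (fderiv ℝ g) :=
    (hg.fderiv_right (m := (⊤ : ℕ∞)) le_rfl).differentiable (by simp)
  have key : ∀ c d : ℝ × ℝ, fderiv ℝ (fun y => fderiv ℝ g y c) x d
      = fderiv ℝ (fderiv ℝ g) x d c := by
    intro c d
    have h : (fun y => fderiv ℝ g y c)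
        = (ContinuousLinearMap.apply ℝ E c) ∘ (fderiv ℝ g) := rfl
    rw [h, fderiv_comp _ (ContinuousLinearMap.apply ℝ E c).differentiableAt (hdf _)]
    simp
  have hsymm : IsSymmSndFDerivAt ℝ g x :=
    hg.contDiffAt.isSymmSndFDerivAt (by rw [minSmoothness_of_isRCLikeNormedField]; exact WithTop.coe_le_coe.mpr (le_top : (2 : ℕ∞) ≤ ⊤))
  show fderiv ℝ (pdx g) x (0, 1) = fderiv ℝ (pdy g) x (1, 0)
  rw [show pdx g = fun y => fderiv ℝ g y (1, 0) from rfl,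
    show pdy g = fun y => fderiv ℝ g y (0, 1) from rfl, key, key]
  exact hsymm _ _

theorem hasDerivAt_param {g dg : ℝ → ℝ → ℝ}
    (hgc : Continuous (uncurry g)) (hdgc : Continuous (uncurry dg))
    (hg : ∀ u t, HasDerivAt (fun t' => g u t') (dg u t) t) (c d t₀ : ℝ) :
    HasDerivAt (fun t => ∫ u in c..d, g u t) (∫ u in c..d, dg u t₀) t₀ := by
  obtain ⟨C, hC⟩ := ((isCompact_uIcc (a := c) (b := d)).prod
    (isCompact_closedBall t₀ 1)).exists_bound_of_continuousOn hdgc.continuousOn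
  refine (intervalIntegral.hasDerivAt_integral_of_dominated_loc_of_deriv_le
    (F := fun t u => g u t) (F' := fun t u => dg u t) (bound := fun _ => C)
    (s := Metric.ball t₀ 1) (Metric.ball_mem_nhds t₀ one_pos) ?_ ?_ ?_ ?_ ?_ ?_).2
  · filter_upwards with x
    exact (hgc.comp (continuous_id.prodMk continuous_const)).aestronglyMeasurable
  · exact (hgc.comp (continuous_id.prodMk continuous_const)).intervalIntegrable c d
  · exact (hdgc.comp (continuous_id.prodMk continuous_const)).aestronglyMeasurable
  · filter_upwards with u hu x hx
    exact hC (u, x) ⟨uIoc_subset_uIcc hu, Metric.ball_subset_closedBall hx⟩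
  · exact intervalIntegrable_const
  · filter_upwards with u hu x hx
    exact hg u x

theorem hasDerivAt_det2 {f g : ℝ → ℝ × ℝ} {f' g' : ℝ × ℝ} {x : ℝ}
    (hf : HasDerivAt f f' x) (hg : HasDerivAt g g' x) :
    HasDerivAt (fun y => det2 (f y) (g y)) (det2 f' (g x) + det2 (f x) g') x := by
  have h1 : HasDerivAt (fun y => (f y).1) f'.1 x :=
    ((ContinuousLinearMap.fst ℝ ℝ ℝ).hasFDerivAt).comp_hasDerivAt x hf
  have h2 : HasDerivAt (fun y => (f y).2) f'.2 x :=
    ((ContinuousLinearMap.snd ℝ ℝ ℝ).hasFDerivAt).comp_hasDerivAt x hf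
  have h3 : HasDerivAt (fun y => (g y).1) g'.1 x :=
    ((ContinuousLinearMap.fst ℝ ℝ ℝ).hasFDerivAt).comp_hasDerivAt x hg
  have h4 : HasDerivAt (fun y => (g y).2) g'.2 x :=
    ((ContinuousLinearMap.snd ℝ ℝ ℝ).hasFDerivAt).comp_hasDerivAt x hg
  have h : HasDerivAt (fun y => (f y).1 * (g y).2 - (f y).2 * (g y).1) _ x :=
    (h1.mul h4).sub (h2.mul h3)
  exact h.congr_deriv (by simp [det2]; ring)

theorem det2_add_left (x y z : ℝ × ℝ) : det2 (x + y) z = det2 x z + det2 y z := by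
  simp [det2]; ring

theorem det2_add_right (x y z : ℝ × ℝ) : det2 x (y + z) = det2 x y + det2 x z := by
  simp [det2]; ring

theorem det2_smul_left (c : ℝ) (x z : ℝ × ℝ) : det2 (c • x) z = c * det2 x z := by
  simp [det2]; ring

theorem det2_smul_right (c : ℝ) (x z : ℝ × ℝ) : det2 x (c • z) = c * det2 x z := by
  simp [det2]; ring

theorem det2_neg_left (x z : ℝ × ℝ) : det2 (-x) z = -det2 x z := by
  simp [det2]; ring

theorem det2_neg_right (x z : ℝ × ℝ) : det2 x (-z) = -det2 x z := by
  simp [det2]; ring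

theorem det2_er_eth (x : ℝ) : det2 (er x) (eth x) = 1 := by
  simp [det2, er, eth]; linear_combination sin_sq_add_cos_sq x

theorem det2_eth_er (x : ℝ) : det2 (eth x) (er x) = -1 := by
  simp [det2, er, eth]; linear_combination -sin_sq_add_cos_sq x

theorem det2_er_er (x : ℝ) : det2 (er x) (er x) = 0 := by
  simp [det2, er, eth]; ring

theorem det2_eth_eth (x : ℝ) : det2 (eth x) (eth x) = 0 := by
  simp [det2, er, eth]; ring

theorem hasDerivAt_er (θ : ℝ) : HasDerivAt er (eth θ) θ :=
  (Real.hasDerivAt_cos θ).prodMk (Real.hasDerivAt_sin θ)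

theorem hasDerivAt_eth (θ : ℝ) : HasDerivAt eth (-er θ) θ :=
  ((Real.hasDerivAt_sin θ).neg).prodMk (Real.hasDerivAt_cos θ)

end Aux

/-- Evolution of length and area under the Minkowski curvature flow, and the
bound on the maximal existence time. -/
theorem stmt14 (a : ℝ → ℝ) (ha : ContDiff ℝ (⊤ : ℕ∞) a) (haper : Function.Periodic a (2 * π))
    (hapos : ∀ θ, 0 < a θ) (hconv : ∀ θ, 0 < a θ + deriv (deriv a) θ)
    (p : ℝ → ℝ × ℝ) (hp : ∀ θ, p θ = a θ • er θ + deriv a θ • eth θ)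
    (q : ℝ → ℝ × ℝ) (hq : ∀ θ, q θ = (det2 (p θ) (deriv p θ))⁻¹ • deriv p θ)
    (F : ℝ → ℝ → ℝ × ℝ) (θf v k : ℝ → ℝ → ℝ)
    (hF : ContDiff ℝ (⊤ : ℕ∞) (Function.uncurry F)) (hθf : ContDiff ℝ (⊤ : ℕ∞) (Function.uncurry θf))
    (hv : ContDiff ℝ (⊤ : ℕ∞) (Function.uncurry v)) (hk : ContDiff ℝ (⊤ : ℕ∞) (Function.uncurry k))
    (hvpos : ∀ u t, 0 < v u t)
    (hFper : ∀ u t, F (u + 2 * π) t = F u t)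
    (hvper : ∀ u t, v (u + 2 * π) t = v u t) (hkper : ∀ u t, k (u + 2 * π) t = k u t)
    (hθfper : ∀ u t, θf (u + 2 * π) t = θf u t + 2 * π)
    (T : ℝ) (hT : 0 < T)
    (heq1 : ∀ u : ℝ, ∀ t ∈ Set.Ico 0 T, deriv (fun u' => F u' t) u = v u t • q (θf u t))
    (heq2 : ∀ u : ℝ, ∀ t ∈ Set.Ico 0 T, deriv (fun t' => F u t') t = -(k u t) • p (θf u t))
    (hcurv : ∀ u : ℝ, ∀ t ∈ Set.Ico 0 T, k u t =
      det2 (p (θf u t)) (deriv p (θf u t)) * deriv (fun u' => θf u' t) u / v u t)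
    (L A : ℝ → ℝ)
    (hL : ∀ t, L t = ∫ u in (0:ℝ)..2 * π, v u t)
    (hA : ∀ t, A t = (1 / 2) * ∫ u in (0:ℝ)..2 * π, det2 (F u t) (deriv (fun u' => F u' t) u))
    (AP : ℝ) (hAP : AP = (1 / 2) * ∫ θ in (0:ℝ)..2 * π, det2 (p θ) (deriv p θ))
    (hApos : ∀ t ∈ Set.Ico 0 T, 0 < A t) :
    (∀ t ∈ Set.Ioo 0 T,
        HasDerivAt L (-∫ u in (0:ℝ)..2 * π, (k u t) ^ 2 * v u t) t ∧
        HasDerivAt A (-(2 * AP)) t) ∧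
      T ≤ A 0 / (2 * AP) := by
  -- ## Basic smoothness of `a` and its derivatives
  have ha0 : ContDiff ℝ (⊤ : ℕ∞) a := ha.of_le (by simp)
  have ha1 : ContDiff ℝ (⊤ : ℕ∞) (deriv a) := (contDiff_infty_iff_deriv.mp ha0).2
  have ha2 : ContDiff ℝ (⊤ : ℕ∞) (deriv (deriv a)) := (contDiff_infty_iff_deriv.mp ha1).2
  have hda : ∀ θ, HasDerivAt a (deriv a θ) θ :=
    fun θ => (ha0.differentiable (by simp) θ).hasDerivAt
  have hda' : ∀ θ, HasDerivAt (deriv a) (deriv (deriv a) θ) θ :=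
    fun θ => (ha1.differentiable (by simp) θ).hasDerivAt
  set b : ℝ → ℝ := fun θ => a θ + deriv (deriv a) θ with hbdef
  have hbC : Continuous b := (ha0.continuous).add ha2.continuous
  have hbpos : ∀ θ, 0 < b θ := hconv
  have hane : ∀ θ, a θ ≠ 0 := fun θ => (hapos θ).ne'
  have hbne : ∀ θ, b θ ≠ 0 := fun θ => (hbpos θ).ne'
  -- ## Geometry of `p` and `q`
  have hpd : ∀ θ, HasDerivAt p (b θ • eth θ) θ := by
    intro θ
    have h1 : HasDerivAt (fun θ => a θ • er θ + deriv a θ • eth θ)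
        (a θ • eth θ + deriv a θ • er θ + (deriv a θ • -er θ + deriv (deriv a) θ • eth θ)) θ :=
      ((hda θ).smul (hasDerivAt_er θ)).add ((hda' θ).smul (hasDerivAt_eth θ))
    have h2 : p = fun θ => a θ • er θ + deriv a θ • eth θ := funext hp
    rw [h2]
    convert h1 using 1
    ext <;> simp [er, eth, hbdef] <;> ring
  have hpderiv : ∀ θ, deriv p θ = b θ • eth θ := fun θ => (hpd θ).deriv
  have hdetp : ∀ θ, det2 (p θ) (deriv p θ) = a θ * b θ := by
    intro θ
    rw [hpderiv θ, hp θ]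
    simp [det2, er, eth]
    linear_combination (a θ * deriv (deriv a) θ + a θ ^ 2) * (sin_sq_add_cos_sq θ)
  have hqe : ∀ θ, q θ = (a θ)⁻¹ • eth θ := by
    intro θ
    rw [hq θ, hdetp θ, hpderiv θ, smul_smul]
    congr 1
    field_simp [hane θ, hbne θ]
  have hqd : ∀ θ, HasDerivAt q
      ((-(deriv a θ) / a θ ^ 2) • eth θ + (a θ)⁻¹ • (-er θ)) θ := by
    intro θ
    have h1 : HasDerivAt (fun θ => (a θ)⁻¹) (-(deriv a θ) / a θ ^ 2) θ := by
      exact (hda θ).inv (hane θ)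
    have h2 : q = fun θ => (a θ)⁻¹ • eth θ := funext hqe
    rw [h2]
    have : HasDerivAt (fun θ => (a θ)⁻¹ • eth θ) _ θ := h1.smul (hasDerivAt_eth θ)
    convert this using 1
    ext <;> simp [er, eth] <;> ring
  have hdetpq : ∀ θ, det2 (p θ) (q θ) = 1 := by
    intro θ
    rw [hp θ, hqe θ]
    simp [det2, er, eth]
    field_simp [hane θ]
    linear_combination (a θ) * (sin_sq_add_cos_sq θ)
  -- ## periodicity
  have hdaper : Function.Periodic (deriv a) (2 * π) := by
    intro x
    rw [← deriv_comp_add_const a (2 * π) x]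
    congr 1
    funext y
    exact haper y
  have herper : ∀ θ, er (θ + 2 * π) = er θ := by
    intro θ; simp [er, Real.cos_add_two_pi, Real.sin_add_two_pi]
  have hethper : ∀ θ, eth (θ + 2 * π) = eth θ := by
    intro θ; simp [eth, Real.cos_add_two_pi, Real.sin_add_two_pi]
  have hpper : ∀ θ, p (θ + 2 * π) = p θ := by
    intro θ; rw [hp, hp, haper θ, hdaper θ, herper θ, hethper θ]
  have hgper : Function.Periodic (fun θ => a θ * b θ) (2 * π) := by
    intro x
    have : deriv (deriv a) (x + 2 * π) = deriv (deriv a) x := by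
      have : Function.Periodic (deriv (deriv a)) (2 * π) := by
        intro y
        rw [← deriv_comp_add_const (deriv a) (2 * π) y]
        congr 1
        funext z
        exact hdaper z
      exact this x
    simp only [hbdef, haper x, this]
  -- ## 2 * AP = ∫ a * b > 0
  have hgC : Continuous fun θ => a θ * b θ := (ha0.continuous).mul hbC
  have h2AP : 2 * AP = ∫ θ in (0:ℝ)..2 * π, a θ * b θ := by
    rw [hAP]
    rw [intervalIntegral.integral_congr (g := fun θ => a θ * b θ) (fun θ _ => hdetp θ)]
    ring
  have hAPpos : 0 < AP := by
    have h1 : 0 < ∫ θ in (0:ℝ)..2 * π, a θ * b θ :=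
      intervalIntegral.intervalIntegral_pos_of_pos (hgC.intervalIntegrable 0 (2 * π))
        (fun x => mul_pos (hapos x) (hbpos x)) (by positivity)
    nlinarith [h2AP]
  -- ## partial derivative framework for the flow
  have hFu : ∀ u t : ℝ, HasDerivAt (fun u' => F u' t) (pdx (Function.uncurry F) (u, t)) u :=
    fun u t => hasDerivAt_pdx hF u t
  have hFt : ∀ u t : ℝ, HasDerivAt (fun t' => F u t') (pdy (Function.uncurry F) (u, t)) t :=
    fun u t => hasDerivAt_pdy hF u t
  have hθx : ∀ u t : ℝ, HasDerivAt (fun u' => θf u' t) (pdx (Function.uncurry θf) (u, t)) u :=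
    fun u t => hasDerivAt_pdx hθf u t
  have hθy : ∀ u t : ℝ, HasDerivAt (fun t' => θf u t') (pdy (Function.uncurry θf) (u, t)) t :=
    fun u t => hasDerivAt_pdy hθf u t
  have hvy : ∀ u t : ℝ, HasDerivAt (fun t' => v u t') (pdy (Function.uncurry v) (u, t)) t :=
    fun u t => hasDerivAt_pdy hv u t
  have hkx : ∀ u t : ℝ, HasDerivAt (fun u' => k u' t) (pdx (Function.uncurry k) (u, t)) u :=
    fun u t => hasDerivAt_pdx hk u t
  have hFu' : ∀ u : ℝ, ∀ t ∈ Set.Ico 0 T, pdx (Function.uncurry F) (u, t) = v u t • q (θf u t) :=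
    fun u t ht => by rw [← (hFu u t).deriv]; exact heq1 u t ht
  have hFt' : ∀ u : ℝ, ∀ t ∈ Set.Ico 0 T, pdy (Function.uncurry F) (u, t) = -(k u t) • p (θf u t) :=
    fun u t ht => by rw [← (hFt u t).deriv]; exact heq2 u t ht
  have hkv : ∀ u : ℝ, ∀ t ∈ Set.Ico 0 T,
      k u t * v u t = a (θf u t) * b (θf u t) * pdx (Function.uncurry θf) (u, t) := by
    intro u t ht
    have hkc := hcurv u t ht
    rw [hdetp, (hθx u t).deriv] at hkc
    rw [hkc]
    field_simp [(hvpos u t).ne']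
  -- ## KEY1 : ∂ₜ v = -k² v
  have key1 : ∀ u : ℝ, ∀ t ∈ Set.Ioo 0 T,
      pdy (Function.uncurry v) (u, t) = -((k u t) ^ 2 * v u t) := by
    intro u t ht
    have hmem : t ∈ Set.Ico 0 T := ⟨ht.1.le, ht.2⟩
    have hnb : Set.Ico 0 T ∈ nhds t :=
      Filter.mem_of_superset (isOpen_Ioo.mem_nhds ht) Set.Ioo_subset_Ico_self
    set θ := θf u t with hθdef
    set θu := pdx (Function.uncurry θf) (u, t) with hθu
    set θt := pdy (Function.uncurry θf) (u, t) with hθt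
    set vt := pdy (Function.uncurry v) (u, t) with hvt
    set ku := pdx (Function.uncurry k) (u, t) with hku
    -- t-derivative of u-derivative of F
    have hAd : HasDerivAt (fun t' => pdx (Function.uncurry F) (u, t'))
        (pdy (pdx (Function.uncurry F)) (u, t)) t := hasDerivAt_pdy (contDiff_pdx hF) u t
    have heva : (fun t' => pdx (Function.uncurry F) (u, t'))
        =ᶠ[nhds t] (fun t' => v u t' • q (θf u t')) := by
      filter_upwards [hnb] with t' ht' using hFu' u t' ht'
    have hBd : HasDerivAt (fun t' => v u t' • q (θf u t'))
        (pdy (pdx (Function.uncurry F)) (u, t)) t := hAd.congr_of_eventuallyEq heva.symm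
    have hqc : HasDerivAt (fun t' => q (θf u t'))
        (θt • ((-(deriv a θ) / a θ ^ 2) • eth θ + (a θ)⁻¹ • (-er θ))) t :=
      (hqd θ).scomp t (hθy u t)
    have hCd : HasDerivAt (fun t' => v u t' • q (θf u t'))
        (v u t • (θt • ((-(deriv a θ) / a θ ^ 2) • eth θ + (a θ)⁻¹ • (-er θ))) + vt • q θ) t :=
      (hvy u t).smul hqc
    have hE1 := hBd.unique hCd
    -- u-derivative of t-derivative of F
    have hfun : (fun u' => pdy (Function.uncurry F) (u', t))
        = fun u' => -(k u' t) • p (θf u' t) := funext fun u' => hFt' u' t hmem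
    have hDd : HasDerivAt (fun u' => pdy (Function.uncurry F) (u', t))
        (pdx (pdy (Function.uncurry F)) (u, t)) u := hasDerivAt_pdx (contDiff_pdy hF) u t
    rw [hfun] at hDd
    have hpc : HasDerivAt (fun u' => p (θf u' t)) (θu • (b θ • eth θ)) u :=
      (hpd θ).scomp u (hθx u t)
    have hkd : HasDerivAt (fun u' => -(k u' t)) (-ku) u := (hkx u t).neg
    have hEd : HasDerivAt (fun u' => -(k u' t) • p (θf u' t))
        ((-(k u t)) • (θu • (b θ • eth θ)) + (-ku) • p θ) u := hkd.smul hpc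
    have hE2 := hDd.unique hEd
    have hEq : v u t • (θt • ((-(deriv a θ) / a θ ^ 2) • eth θ + (a θ)⁻¹ • (-er θ))) + vt • q θ
        = (-(k u t)) • (θu • (b θ • eth θ)) + (-ku) • p θ :=
      hE1.symm.trans ((pdy_pdx hF (u, t)).trans hE2)
    have W1 := congrArg (fun w => det2 w (eth θ)) hEq
    have W2 := congrArg (fun w => det2 (er θ) w) hEq
    simp only [hqe, hp, det2_add_left, det2_add_right, det2_smul_left, det2_smul_right,
      det2_neg_left, det2_neg_right, det2_er_eth, det2_eth_er, det2_er_er, det2_eth_eth,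
      mul_zero, mul_one, mul_neg, add_zero, zero_add, neg_neg, neg_zero] at W1 W2
    have hKV := hkv u t hmem
    rw [← hθdef, ← hθu] at hKV
    field_simp [hane θ] at W1 W2
    have goal2 : vt * a θ ^ 2 = -(k u t ^ 2 * v u t) * a θ ^ 2 := by
      linear_combination a θ * W2 - (deriv a θ * a θ) * W1 + (k u t * a θ ^ 2) * hKV
    exact mul_right_cancel₀ (pow_ne_zero 2 (hane θ)) goal2
  -- ## derivative of L
  have hLd : ∀ t ∈ Set.Ioo 0 T,
      HasDerivAt L (-∫ u in (0:ℝ)..2 * π, (k u t) ^ 2 * v u t) t := by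
    intro t ht
    have h0 : HasDerivAt (fun t' => ∫ u in (0:ℝ)..2 * π, v u t')
        (∫ u in (0:ℝ)..2 * π, pdy (Function.uncurry v) (u, t)) t :=
      hasDerivAt_param (g := v) (dg := fun u t' => pdy (Function.uncurry v) (u, t'))
        hv.continuous (contDiff_pdy hv).continuous hvy 0 (2 * π) t
    have heq : (∫ u in (0:ℝ)..2 * π, pdy (Function.uncurry v) (u, t))
        = -∫ u in (0:ℝ)..2 * π, (k u t) ^ 2 * v u t := by
      rw [← intervalIntegral.integral_neg]
      exact intervalIntegral.integral_congr fun u _ => key1 u t ht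
    rw [show L = fun t' => ∫ u in (0:ℝ)..2 * π, v u t' from funext hL]
    exact heq ▸ h0
  -- ## the area integrand
  have hWc : ContDiff ℝ (⊤ : ℕ∞)
      (fun x : ℝ × ℝ => det2 (Function.uncurry F x) (pdx (Function.uncurry F) x)) := by
    have h1 : ContDiff ℝ (⊤ : ℕ∞) (pdx (Function.uncurry F)) := contDiff_pdx hF
    exact ((contDiff_fst.comp hF).mul (contDiff_snd.comp h1)).sub
      ((contDiff_snd.comp hF).mul (contDiff_fst.comp h1))
  have hAe : A = fun t' => (1 / 2) * ∫ u in (0:ℝ)..2 * π,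
      det2 (F u t') (pdx (Function.uncurry F) (u, t')) := by
    funext t'
    rw [hA t']
    congr 1
    exact intervalIntegral.integral_congr fun u _ => by rw [(hFu u t').deriv]
  -- ## ∫ k v = 2 AP on Ico
  have hkvint : ∀ t ∈ Set.Ico 0 T, (∫ u in (0:ℝ)..2 * π, k u t * v u t) = 2 * AP := by
    intro t ht
    set Gg : ℝ → ℝ := fun x => ∫ s in (0:ℝ)..x, a s * b s with hGgdef
    have hGg : ∀ x, HasDerivAt Gg (a x * b x) x := by
      intro x
      exact (intervalIntegral.integral_hasStrictDerivAt_right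
        (hgC.intervalIntegrable 0 x) (hgC.stronglyMeasurableAtFilter volume (nhds x))
        hgC.continuousAt).hasDerivAt
    have hcomp : ∀ u' : ℝ, HasDerivAt (fun u'' => Gg (θf u'' t))
        (a (θf u' t) * b (θf u' t) * pdx (Function.uncurry θf) (u', t)) u' :=
      fun u' => by
        have := (hGg (θf u' t)).comp u' (hθx u' t)
        exact this
    have hcont : Continuous fun u' =>
        a (θf u' t) * b (θf u' t) * pdx (Function.uncurry θf) (u', t) := by
      have hθc : Continuous fun u' => θf u' t :=
        hθf.continuous.comp (continuous_id.prodMk continuous_const)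
      exact ((hgC.comp hθc)).mul
        ((contDiff_pdx hθf).continuous.comp (continuous_id.prodMk continuous_const))
    have h1 : (∫ u in (0:ℝ)..2 * π, k u t * v u t)
        = ∫ u in (0:ℝ)..2 * π, a (θf u t) * b (θf u t) * pdx (Function.uncurry θf) (u, t) :=
      intervalIntegral.integral_congr fun u _ => hkv u t ht
    have h2 : (∫ u in (0:ℝ)..2 * π,
          a (θf u t) * b (θf u t) * pdx (Function.uncurry θf) (u, t))
        = Gg (θf (2 * π) t) - Gg (θf 0 t) :=
      intervalIntegral.integral_eq_sub_of_hasDerivAt (fun u' _ => hcomp u')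
        (hcont.intervalIntegrable 0 (2 * π))
    have h3 : θf (2 * π) t = θf 0 t + 2 * π := by
      have := hθfper 0 t
      rwa [zero_add] at this
    have h4 : Gg (θf 0 t + 2 * π) - Gg (θf 0 t) = 2 * AP := by
      have hadd : Gg (θf 0 t) + (∫ s in (θf 0 t)..(θf 0 t + 2 * π), a s * b s)
          = Gg (θf 0 t + 2 * π) := by
        exact intervalIntegral.integral_add_adjacent_intervals
          (hgC.intervalIntegrable 0 (θf 0 t)) (hgC.intervalIntegrable (θf 0 t) (θf 0 t + 2 * π))
      have hper : (∫ s in (θf 0 t)..(θf 0 t + 2 * π), a s * b s)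
          = ∫ s in (0:ℝ)..(0 + 2 * π), a s * b s := hgper.intervalIntegral_add_eq (θf 0 t) 0
      rw [← hadd, hper]
      rw [zero_add, h2AP]
      ring
    rw [h1, h2, h3, h4]
  -- ## derivative of A
  have hAd2 : ∀ t ∈ Set.Ioo 0 T, HasDerivAt A (-(2 * AP)) t := by
    intro t ht
    have hmem : t ∈ Set.Ico 0 T := ⟨ht.1.le, ht.2⟩
    have h0 : HasDerivAt (fun t' => ∫ u in (0:ℝ)..2 * π,
          det2 (F u t') (pdx (Function.uncurry F) (u, t')))
        (∫ u in (0:ℝ)..2 * π,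
          pdy (fun x : ℝ × ℝ => det2 (Function.uncurry F x) (pdx (Function.uncurry F) x)) (u, t)) t :=
      hasDerivAt_param
        (g := fun u t' => det2 (F u t') (pdx (Function.uncurry F) (u, t')))
        (dg := fun u t' => pdy
          (fun x : ℝ × ℝ => det2 (Function.uncurry F x) (pdx (Function.uncurry F) x)) (u, t'))
        hWc.continuous (contDiff_pdy hWc).continuous
        (fun u t' => hasDerivAt_pdy hWc u t') 0 (2 * π) t
    -- pointwise formula for the t-derivative of the integrand
    have hpt : ∀ u : ℝ,
        pdy (fun x : ℝ × ℝ => det2 (Function.uncurry F x) (pdx (Function.uncurry F) x)) (u, t)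
          = det2 (pdy (Function.uncurry F) (u, t)) (pdx (Function.uncurry F) (u, t))
            + det2 (F u t) (pdy (pdx (Function.uncurry F)) (u, t)) := by
      intro u
      have hd1 : HasDerivAt
          (fun t' => det2 (F u t') (pdx (Function.uncurry F) (u, t')))
          (pdy (fun x : ℝ × ℝ => det2 (Function.uncurry F x) (pdx (Function.uncurry F) x)) (u, t)) t :=
        hasDerivAt_pdy hWc u t
      have hd2 : HasDerivAt
          (fun t' => det2 (F u t') (pdx (Function.uncurry F) (u, t')))
          (det2 (pdy (Function.uncurry F) (u, t)) (pdx (Function.uncurry F) (u, t))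
            + det2 (F u t) (pdy (pdx (Function.uncurry F)) (u, t))) t :=
        hasDerivAt_det2 (hFt u t) (hasDerivAt_pdy (contDiff_pdx hF) u t)
      exact hd1.unique hd2
    -- integrand rewritten using Schwarz and the boundary function Φ
    have hΦd : ∀ u' : ℝ, HasDerivAt
        (fun u'' => det2 (F u'' t) (pdy (Function.uncurry F) (u'', t)))
        (det2 (pdx (Function.uncurry F) (u', t)) (pdy (Function.uncurry F) (u', t))
          + det2 (F u' t) (pdx (pdy (Function.uncurry F)) (u', t))) u' :=
      fun u' => hasDerivAt_det2 (hFu u' t) (hasDerivAt_pdx (contDiff_pdy hF) u' t)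
    have hpt2 : ∀ u : ℝ,
        pdy (fun x : ℝ × ℝ => det2 (Function.uncurry F x) (pdx (Function.uncurry F) x)) (u, t)
          = 2 * det2 (pdy (Function.uncurry F) (u, t)) (pdx (Function.uncurry F) (u, t))
            + (det2 (pdx (Function.uncurry F) (u, t)) (pdy (Function.uncurry F) (u, t))
              + det2 (F u t) (pdx (pdy (Function.uncurry F)) (u, t))) := by
      intro u
      rw [hpt u, pdy_pdx hF (u, t)]
      have : det2 (pdx (Function.uncurry F) (u, t)) (pdy (Function.uncurry F) (u, t))
          = -det2 (pdy (Function.uncurry F) (u, t)) (pdx (Function.uncurry F) (u, t)) := by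
        simp [det2]; ring
      rw [this]
      ring
    -- continuity facts in u
    have hF1cont : Continuous fun u : ℝ => (u, t) := continuous_id.prodMk continuous_const
    have hc_pdy : Continuous fun u => pdy (Function.uncurry F) (u, t) :=
      (contDiff_pdy hF).continuous.comp hF1cont
    have hc_pdx : Continuous fun u => pdx (Function.uncurry F) (u, t) :=
      (contDiff_pdx hF).continuous.comp hF1cont
    have hc_F : Continuous fun u => F u t := hF.continuous.comp hF1cont
    have hc_pdxpdy : Continuous fun u => pdx (pdy (Function.uncurry F)) (u, t) :=
      (contDiff_pdx (contDiff_pdy hF)).continuous.comp hF1cont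
    have hdet2cont : ∀ {f g : ℝ → ℝ × ℝ}, Continuous f → Continuous g →
        Continuous fun u => det2 (f u) (g u) := by
      intro f g hf hg
      exact (hf.fst.mul hg.snd).sub (hf.snd.mul hg.fst)
    -- split the integral
    have hsplit : (∫ u in (0:ℝ)..2 * π,
          pdy (fun x : ℝ × ℝ => det2 (Function.uncurry F x) (pdx (Function.uncurry F) x)) (u, t))
        = (∫ u in (0:ℝ)..2 * π,
            2 * det2 (pdy (Function.uncurry F) (u, t)) (pdx (Function.uncurry F) (u, t)))
          + ∫ u in (0:ℝ)..2 * π,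
            (det2 (pdx (Function.uncurry F) (u, t)) (pdy (Function.uncurry F) (u, t))
              + det2 (F u t) (pdx (pdy (Function.uncurry F)) (u, t))) := by
      rw [intervalIntegral.integral_congr (g := fun u =>
          2 * det2 (pdy (Function.uncurry F) (u, t)) (pdx (Function.uncurry F) (u, t))
            + (det2 (pdx (Function.uncurry F) (u, t)) (pdy (Function.uncurry F) (u, t))
              + det2 (F u t) (pdx (pdy (Function.uncurry F)) (u, t))))
          (fun u _ => hpt2 u)]
      exact intervalIntegral.integral_add
        ((continuous_const.mul (hdet2cont hc_pdy hc_pdx)).intervalIntegrable 0 (2 * π))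
        (((hdet2cont hc_pdx hc_pdy).add (hdet2cont hc_F hc_pdxpdy)).intervalIntegrable 0 (2 * π))
    -- the boundary term vanishes
    have hFTC : (∫ u in (0:ℝ)..2 * π,
          (det2 (pdx (Function.uncurry F) (u, t)) (pdy (Function.uncurry F) (u, t))
            + det2 (F u t) (pdx (pdy (Function.uncurry F)) (u, t))))
        = det2 (F (2 * π) t) (pdy (Function.uncurry F) (2 * π, t))
          - det2 (F 0 t) (pdy (Function.uncurry F) (0, t)) :=
      intervalIntegral.integral_eq_sub_of_hasDerivAt (fun u _ => hΦd u)
        (((hdet2cont hc_pdx hc_pdy).add (hdet2cont hc_F hc_pdxpdy)).intervalIntegrable 0 (2 * π))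
    have hbd : det2 (F (2 * π) t) (pdy (Function.uncurry F) (2 * π, t))
        = det2 (F 0 t) (pdy (Function.uncurry F) (0, t)) := by
      have e1 : F (2 * π) t = F 0 t := by simpa using hFper 0 t
      have e2 : pdy (Function.uncurry F) (2 * π, t) = pdy (Function.uncurry F) (0, t) := by
        rw [← (hFt (2 * π) t).deriv, ← (hFt 0 t).deriv]
        congr 1
        funext t'
        simpa using hFper 0 t'
      rw [e1, e2]
    -- the first term is -2 ∫ k v
    have hψ : ∀ u : ℝ, det2 (pdy (Function.uncurry F) (u, t)) (pdx (Function.uncurry F) (u, t))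
        = -(k u t * v u t) := by
      intro u
      rw [hFt' u t hmem, hFu' u t hmem, det2_smul_left, det2_smul_right, hdetpq]
      ring
    have hterm1 : (∫ u in (0:ℝ)..2 * π,
          2 * det2 (pdy (Function.uncurry F) (u, t)) (pdx (Function.uncurry F) (u, t)))
        = -(4 * AP) := by
      rw [intervalIntegral.integral_congr (g := fun u => -2 * (k u t * v u t))
        (fun u _ => by rw [hψ u]; ring)]
      rw [intervalIntegral.integral_const_mul, hkvint t hmem]
      ring
    have hval : (∫ u in (0:ℝ)..2 * π,
          pdy (fun x : ℝ × ℝ => det2 (Function.uncurry F x) (pdx (Function.uncurry F) x)) (u, t))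
        = -(4 * AP) := by
      rw [hsplit, hFTC, hbd, hterm1]
      ring
    rw [hval] at h0
    rw [hAe]
    have := h0.const_mul (1 / 2 : ℝ)
    exact this.congr_deriv (by ring)
  -- ## conclusion
  refine ⟨fun t ht => ⟨hLd t ht, hAd2 t ht⟩, ?_⟩
  have hAcont : Continuous A := by
    rw [hAe]
    exact continuous_const.mul
      (intervalIntegral.continuous_parametric_intervalIntegral_of_continuous'
        (f := fun t' u => det2 (F u t') (pdx (Function.uncurry F) (u, t')))
        (hWc.continuous.comp continuous_swap) 0 (2 * π))
  have hlin : ∀ t' ∈ Set.Ioo 0 T, A t' = A 0 - 2 * AP * t' := by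
    intro t' ht'
    obtain ⟨c, _, hceq⟩ := exists_hasDerivAt_eq_slope A (fun _ => -(2 * AP)) ht'.1
      hAcont.continuousOn (fun x hx => hAd2 x ⟨hx.1, hx.2.trans ht'.2⟩)
    rw [eq_div_iff (sub_ne_zero.mpr (ne_of_gt ht'.1))] at hceq
    linarith [hceq]
  by_contra hcon
  push_neg at hcon
  have h1 : max (T / 2) (A 0 / (2 * AP)) < T := max_lt (by linarith) hcon
  have h2 : 0 < max (T / 2) (A 0 / (2 * AP)) :=
    lt_of_lt_of_le (by linarith) (le_max_left _ _)
  have h3 := hApos _ ⟨h2.le, h1⟩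
  have h4 := hlin _ ⟨h2, h1⟩
  have h5 : max (T / 2) (A 0 / (2 * AP)) < A 0 / (2 * AP) := by
    rw [lt_div_iff₀ (by linarith : (0:ℝ) < 2 * AP)]
    nlinarith
  exact absurd (le_max_right (T / 2) (A 0 / (2 * AP))) (not_le.mpr h5)

end
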